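/- arXiv:2603.02101 — 2 statements merged into one kernel-verified Lean document; each statement's English description precedes it below -/
import Mathlib

section
/- For all natural numbers k ≤ n, the sum of binomial coefficients ∑_{j=0}^{k} C(n, j) is at most exp(k · log(e·n/k)). -/
/-!
Chernoff-type trick: for `0 ≤ x ≤ 1`, multiplying the partial sum by `x ^ k` bounds it by the
full binomial expansion, `(∑_{j ≤ k} C(n,j)) x^k ≤ ∑_j C(n,j) x^j = (1 + x)^n ≤ exp (n x)`.
The choice `x = k / n` turns `exp (n x) / x ^ k` into `(e n / k) ^ k`.
-/

open Finset Real

lemma sum_range_choose_mul_pow_le_add_one_pow {x : ℝ} (hx : 0 ≤ x) {n k : ℕ} (hkn : k ≤ n) :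
    ∑ j ∈ range (k + 1), (n.choose j : ℝ) * x ^ j ≤ (x + 1) ^ n := by
  calc ∑ j ∈ range (k + 1), (n.choose j : ℝ) * x ^ j
      ≤ ∑ j ∈ range (n + 1), (n.choose j : ℝ) * x ^ j :=
        sum_le_sum_of_subset_of_nonneg (range_subset_range.2 (by omega))
          fun _ _ _ ↦ by positivity
    _ = (x + 1) ^ n := by
        rw [add_pow]
        exact sum_congr rfl fun j _ ↦ by ring

lemma sum_range_choose_mul_pow_le_exp {x : ℝ} (hx₀ : 0 ≤ x) (hx₁ : x ≤ 1) {n k : ℕ}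
    (hkn : k ≤ n) :
    (∑ j ∈ range (k + 1), (n.choose j : ℝ)) * x ^ k ≤ exp (n * x) := by
  calc (∑ j ∈ range (k + 1), (n.choose j : ℝ)) * x ^ k
      = ∑ j ∈ range (k + 1), (n.choose j : ℝ) * x ^ k := sum_mul ..
    _ ≤ ∑ j ∈ range (k + 1), (n.choose j : ℝ) * x ^ j := by
        refine sum_le_sum fun j hj ↦ mul_le_mul_of_nonneg_left ?_ (by positivity)
        exact pow_le_pow_of_le_one hx₀ hx₁ (Nat.lt_succ_iff.1 (mem_range.1 hj))
    _ ≤ (x + 1) ^ n := sum_range_choose_mul_pow_le_add_one_pow hx₀ hkn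
    _ ≤ exp x ^ n := by gcongr; linarith [add_one_le_exp x]
    _ = exp (n * x) := (exp_nat_mul x n).symm

/-- For all natural numbers `1 ≤ k ≤ n`, the sum of binomial coefficients
`∑_{j=0}^{k} C(n, j)` is at most `exp (k · log (e·n/k))`. -/
theorem stmt0 (n k : ℕ) (hk : 1 ≤ k) (hkn : k ≤ n) :
    ((∑ j ∈ Finset.range (k + 1), n.choose j : ℕ) : ℝ) ≤
      Real.exp ((k : ℝ) * Real.log (Real.exp 1 * n / k)) := by
  have hk₀ : (0 : ℝ) < k := by exact_mod_cast hk
  have hn₀ : (0 : ℝ) < n := by exact_mod_cast hk.trans hkn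
  set x : ℝ := k / n with hx
  have hx₀ : 0 < x := by positivity
  have hx₁ : x ≤ 1 := (div_le_one hn₀).2 (by exact_mod_cast hkn)
  have hrhs : exp (k * log (exp 1 * n / k)) = exp (n * x) / x ^ k := by
    rw [exp_nat_mul, exp_log (by positivity), hx, mul_div_cancel₀ _ hn₀.ne', ← exp_one_pow,
      eq_div_iff (by positivity), ← mul_pow]
    congr 1
    field_simp
  rw [hrhs, le_div_iff₀ (pow_pos hx₀ k)]
  push_cast
  exact sum_range_choose_mul_pow_le_exp hx₀.le hx₁ hkn
end

section
/- Let G be a bipartite d-regular graph with bipartition (O, E). For the antiferromagnetic Ising model, the partition function Ẑ of the polymer-model approximation satisfies Ẑ = (1+λ)^{n/2}·(Ξ_O + Ξ_E), where for D ∈ {O, E}, Ξ_D = ∑_{Θ̂} ∏_{(A,B)∈Θ̂} ω(A,B) is the decorated polymer partition function with weights ω(A,B) = λ^{|A|+|B|}·e^{-β|E(A,B)|}/(1+λ)^{|N(A)|}. -/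
open Finset Real
open scoped Classical

noncomputable section

variable {V : Type*} [Fintype V] [DecidableEq V]

/-- The square of a graph: vertices adjacent iff distinct and at distance at most 2. -/
def squareGraph (G : SimpleGraph V) : SimpleGraph V where
  Adj x y := x ≠ y ∧ (G.Adj x y ∨ ∃ z, G.Adj x z ∧ G.Adj z y)
  symm := by
    constructor
    rintro x y ⟨hxy, h | ⟨z, h1, h2⟩⟩
    · exact ⟨hxy.symm, Or.inl h.symm⟩
    · exact ⟨hxy.symm, Or.inr ⟨z, h2.symm, h1.symm⟩⟩
  loopless := by constructor; rintro x ⟨h, -⟩; exact h rfl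

/-- A vertex subset is 2-linked if it induces a connected subgraph of `G²`. -/
def TwoLinked (G : SimpleGraph V) (A : Finset V) : Prop :=
  (SimpleGraph.induce (↑A : Set V) (squareGraph G)).Connected

/-- The (external) neighborhood of a vertex set `A`. -/
def nbr (G : SimpleGraph V) (A : Finset V) : Finset V :=
  Finset.univ.filter fun v => v ∉ A ∧ ∃ a ∈ A, G.Adj a v

/-- The bipartite closure of `A ⊆ D`. -/
def bipClosure (G : SimpleGraph V) (D A : Finset V) : Finset V :=
  D.filter fun v => nbr G {v} ⊆ nbr G A

/-- The number of edges between `A` and `B` (for disjoint `A`, `B`). -/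
def eBetween (G : SimpleGraph V) (A B : Finset V) : ℕ :=
  ((A ×ˢ B).filter fun p => G.Adj p.1 p.2).card

/-- The number of edges of `G` induced by `S`. -/
def inducedEdgeCount (G : SimpleGraph V) [DecidableRel G.Adj] (S : Finset V) : ℕ :=
  (G.edgeFinset.filter fun e => ∀ x ∈ e, x ∈ S).card

/-- The weight of a decorated polymer `(A, B)`:
`ω(A,B) = λ^{|A|+|B|}·e^{-β|E(A,B)|}/(1+λ)^{|N(A)|}`. -/
def polyWeight (G : SimpleGraph V) (lam beta : ℝ) (p : Finset V × Finset V) : ℝ :=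
  lam ^ (p.1.card + p.2.card) * Real.exp (-beta * (eBetween G p.1 p.2 : ℝ)) /
    (1 + lam) ^ (nbr G p.1).card

/-- A decorated polymer with defect side `D`: a 2-linked set `A ⊆ D` with
`|[A]| ≤ (3/4)|D|` together with a decoration `B ⊆ N(A)`. -/
def IsPolymer (G : SimpleGraph V) (D : Finset V) (p : Finset V × Finset V) : Prop :=
  p.1 ⊆ D ∧ TwoLinked G p.1 ∧ ((bipClosure G D p.1).card : ℝ) ≤ (3 / 4) * (D.card : ℝ) ∧
    p.2 ⊆ nbr G p.1

/-- Two decorated polymers are compatible if the union of their supports is not 2-linked. -/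
def PolyCompat (G : SimpleGraph V) (p q : Finset V × Finset V) : Prop :=
  ¬ TwoLinked G (p.1 ∪ q.1)

/-- A decorated polymer configuration: a set of pairwise compatible decorated polymers. -/
def IsConfig (G : SimpleGraph V) (D : Finset V) (Θ : Finset (Finset V × Finset V)) : Prop :=
  (∀ p ∈ Θ, IsPolymer G D p) ∧ ∀ p ∈ Θ, ∀ q ∈ Θ, p ≠ q → PolyCompat G p q

/-- The decorated polymer partition function `Ξ_D`. -/
def Xi (G : SimpleGraph V) (lam beta : ℝ) (D : Finset V) : ℝ :=
  ∑ Θ ∈ Finset.univ.filter (IsConfig G D), ∏ p ∈ Θ, polyWeight G lam beta p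

/-- `A` is a maximal 2-linked subset of `S`. -/
def MaxComp (G : SimpleGraph V) (S A : Finset V) : Prop :=
  A ⊆ S ∧ TwoLinked G A ∧ ∀ A', A ⊆ A' → A' ⊆ S → TwoLinked G A' → A' = A

/-- The decorated polymer configuration recovered from `S` with defect side `D`:
the maximal 2-linked components `A` of `S ∩ D`, each decorated by `S ∩ N(A)`. -/
def hatTheta (G : SimpleGraph V) (S D : Finset V) : Finset (Finset V × Finset V) :=
  ((S ∩ D).powerset.filter (MaxComp G (S ∩ D))).image fun A => (A, S ∩ nbr G A)

/-- `ω̂*(S, D) = 1[Θ̂(S) is a valid configuration]·λ^{|S|}e^{-β|E(S)|}`. -/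
def hatWstar (G : SimpleGraph V) [DecidableRel G.Adj] (lam beta : ℝ) (S D : Finset V) : ℝ :=
  if IsConfig G D (hatTheta G S D) then
    lam ^ S.card * Real.exp (-beta * (inducedEdgeCount G S : ℝ))
  else 0

/-!
Fix the defect side `D` and let `D'` be the other side. A set `S` whose configuration `Θ̂(S)` is
valid is recovered from `Θ = Θ̂(S)` and its free vertices `T = S \ (D ∪ N(Θ)) ⊆ D' \ N(Θ)` as
`S = ⋃_{(A,B) ∈ Θ} (A ∪ B) ∪ T`, and every valid configuration with every such `T` arises in this
way. As `G` is bipartite, each edge of `S` joins a support `A` to its decoration `B`, so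
`λ^{|S|} e^{-β|E(S)|} = ∏ λ^{|A|+|B|} e^{-β|E(A,B)|} · λ^{|T|}`. The neighbourhoods of distinct
polymers are disjoint, so summing over `T` gives `∑_S ω̂*(S, D) = (1 + λ)^{|D'|} Ξ_D`, and
`|D'| = n/2`.
-/

section TwoLinkedSets

omit [Fintype V]

variable {G : SimpleGraph V} {A B W : Finset V}

namespace TwoLinked

omit [DecidableEq V] in
lemma nonempty (h : TwoLinked G A) : A.Nonempty := by
  obtain ⟨⟨x, hx⟩⟩ := SimpleGraph.Connected.nonempty h
  exact ⟨x, hx⟩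

omit [DecidableEq V] in
lemma singleton (x : V) : TwoLinked G {x} := by
  rw [TwoLinked, Finset.coe_singleton, SimpleGraph.induce_singleton_eq_top]
  exact SimpleGraph.connected_top

lemma union_of_inter_nonempty (hA : TwoLinked G A) (hB : TwoLinked G B)
    (hAB : (A ∩ B).Nonempty) : TwoLinked G (A ∪ B) := by
  rw [TwoLinked, Finset.coe_union]
  exact SimpleGraph.induce_union_connected hA.preconnected hB.preconnected
    (by exact_mod_cast hAB)

lemma union_of_adj (hA : TwoLinked G A) (hB : TwoLinked G B) {a b : V} (ha : a ∈ A) (hb : b ∈ B)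
    (hab : (squareGraph G).Adj a b) : TwoLinked G (A ∪ B) := by
  rw [TwoLinked, Finset.coe_union]
  exact SimpleGraph.connected_induce_union hA.preconnected hB.preconnected ha hb hab

lemma subset_of_forall_adj_mem (hB : TwoLinked G B) {x : V} (hxA : x ∈ A) (hxB : x ∈ B)
    (hA : ∀ a ∈ A, ∀ b ∈ B, (squareGraph G).Adj a b → b ∈ A) : B ⊆ A := by
  intro y hyB
  by_contra hyA
  obtain ⟨w⟩ := hB.preconnected ⟨x, hxB⟩ ⟨y, hyB⟩
  obtain ⟨d, -, hd₁, hd₂⟩ := w.exists_boundary_dart {z | z.1 ∈ A} hxA hyA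
  exact hd₂ (hA _ hd₁ _ d.snd.2 d.adj)

end TwoLinked

namespace MaxComp

lemma eq_of_twoLinked_union (hA : MaxComp G W A) (hB : MaxComp G W B)
    (hAB : TwoLinked G (A ∪ B)) : A = B := by
  have hW : A ∪ B ⊆ W := Finset.union_subset hA.1 hB.1
  rw [← hA.2.2 _ Finset.subset_union_left hW hAB, hB.2.2 _ Finset.subset_union_right hW hAB]

lemma eq_of_inter_nonempty (hA : MaxComp G W A) (hB : MaxComp G W B) (hAB : (A ∩ B).Nonempty) :
    A = B :=
  hA.eq_of_twoLinked_union hB (hA.2.1.union_of_inter_nonempty hB.2.1 hAB)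

lemma eq_or_disjoint (hA : MaxComp G W A) (hB : MaxComp G W B) : A = B ∨ Disjoint A B := by
  rw [or_iff_not_imp_right, Finset.not_disjoint_iff_nonempty_inter]
  exact hA.eq_of_inter_nonempty hB

lemma eq_of_adj (hA : MaxComp G W A) (hB : MaxComp G W B) {a b : V} (ha : a ∈ A) (hb : b ∈ B)
    (hab : (squareGraph G).Adj a b) : A = B :=
  hA.eq_of_twoLinked_union hB (hA.2.1.union_of_adj hB.2.1 ha hb hab)

end MaxComp

lemma exists_maxComp_mem {x : V} (hx : x ∈ W) : ∃ A, MaxComp G W A ∧ x ∈ A := by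
  obtain ⟨A, hxA, hA, hmax⟩ := Finset.exists_le_maximal
    (W.powerset.filter fun A => x ∈ A ∧ TwoLinked G A)
    (Finset.mem_filter.2 ⟨by simpa using hx, Finset.mem_singleton_self x, .singleton x⟩)
  simp only [Finset.mem_filter, Finset.mem_powerset] at hA hmax
  refine ⟨A, ⟨hA.1, hA.2.2, fun A' hAA' hA'W hA' => ?_⟩, hA.2.1⟩
  exact (hmax ⟨hA'W, hAA' hA.2.1, hA'⟩ hAA').antisymm hAA'

end TwoLinkedSets

section Configurations

variable {G : SimpleGraph V} {D S W A B : Finset V} {Θ : Finset (Finset V × Finset V)}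
  {p q : Finset V × Finset V}

lemma mem_nbr {v : V} : v ∈ nbr G A ↔ v ∉ A ∧ ∃ a ∈ A, G.Adj a v := by
  simp [nbr]

lemma MaxComp.disjoint_nbr (hA : MaxComp G W A) (hB : MaxComp G W B) (hAB : A ≠ B) :
    Disjoint (nbr G A) (nbr G B) := by
  refine Finset.disjoint_left.2 fun v hvA hvB => hAB ?_
  obtain ⟨-, a, ha, hav⟩ := mem_nbr.1 hvA
  obtain ⟨-, b, hb, hbv⟩ := mem_nbr.1 hvB
  by_cases hab : a = b
  · exact hA.eq_of_inter_nonempty hB ⟨a, Finset.mem_inter.2 ⟨ha, hab ▸ hb⟩⟩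
  · exact hA.eq_of_adj hB ha hb ⟨hab, Or.inr ⟨v, hav, hbv.symm⟩⟩

namespace IsConfig

variable (hΘ : IsConfig G D Θ)
include hΘ

lemma eq_of_fst_eq (hp : p ∈ Θ) (hq : q ∈ Θ) (h : p.1 = q.1) : p = q := by
  by_contra hpq
  have := hΘ.2 p hp q hq hpq
  rw [PolyCompat, ← h, Finset.union_self] at this
  exact this (hΘ.1 p hp).2.1

/-- Compatibility forbids `G²`-edges between distinct supports. -/
lemma maxComp (hp : p ∈ Θ) : MaxComp G (Θ.biUnion Prod.fst) p.1 := by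
  have hlinked : TwoLinked G p.1 := (hΘ.1 p hp).2.1
  refine ⟨Finset.subset_biUnion_of_mem Prod.fst hp, hlinked, fun A' hpA' hA'W hA' => ?_⟩
  obtain ⟨x, hx⟩ := hlinked.nonempty
  refine (hA'.subset_of_forall_adj_mem hx (hpA' hx) fun a ha b hb hab => ?_).antisymm hpA'
  obtain ⟨q, hq, hbq⟩ := Finset.mem_biUnion.1 (hA'W hb)
  by_cases hpq : p = q
  · exact hpq ▸ hbq
  · exact absurd (hlinked.union_of_adj (hΘ.1 q hq).2.1 ha hbq hab) (hΘ.2 p hp q hq hpq)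

lemma exists_fst_eq (hA : MaxComp G (Θ.biUnion Prod.fst) A) : ∃ p ∈ Θ, p.1 = A := by
  obtain ⟨x, hx⟩ := hA.2.1.nonempty
  obtain ⟨p, hp, hxp⟩ := Finset.mem_biUnion.1 (hA.1 hx)
  exact ⟨p, hp, (hΘ.maxComp hp).eq_of_inter_nonempty hA ⟨x, Finset.mem_inter.2 ⟨hxp, hx⟩⟩⟩

lemma disjoint_fst (hp : p ∈ Θ) (hq : q ∈ Θ) (hpq : p ≠ q) : Disjoint p.1 q.1 :=
  ((hΘ.maxComp hp).eq_or_disjoint (hΘ.maxComp hq)).resolve_left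
    fun h => hpq (hΘ.eq_of_fst_eq hp hq h)

lemma disjoint_nbr (hp : p ∈ Θ) (hq : q ∈ Θ) (hpq : p ≠ q) :
    Disjoint (nbr G p.1) (nbr G q.1) :=
  (hΘ.maxComp hp).disjoint_nbr (hΘ.maxComp hq) fun h => hpq (hΘ.eq_of_fst_eq hp hq h)

end IsConfig

lemma mem_hatTheta : p ∈ hatTheta G S D ↔ MaxComp G (S ∩ D) p.1 ∧ p.2 = S ∩ nbr G p.1 := by
  simp only [hatTheta, Finset.mem_image, Finset.mem_filter, Finset.mem_powerset]
  constructor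
  · rintro ⟨A, ⟨-, hA⟩, rfl⟩
    exact ⟨hA, rfl⟩
  · rintro ⟨hA, hp⟩
    exact ⟨p.1, ⟨hA.1, hA⟩, by rw [← hp]⟩

lemma biUnion_fst_hatTheta : (hatTheta G S D).biUnion Prod.fst = S ∩ D := by
  refine Finset.Subset.antisymm (Finset.biUnion_subset.2 fun p hp => (mem_hatTheta.1 hp).1.1)
    fun x hx => ?_
  obtain ⟨A, hA, hxA⟩ := exists_maxComp_mem (G := G) hx
  exact Finset.mem_biUnion.2 ⟨(A, S ∩ nbr G A), mem_hatTheta.2 ⟨hA, rfl⟩, hxA⟩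

end Configurations

def configNbr (G : SimpleGraph V) (Θ : Finset (Finset V × Finset V)) : Finset V :=
  Θ.biUnion fun p => nbr G p.1

def assemble (Θ : Finset (Finset V × Finset V)) (T : Finset V) : Finset V :=
  Θ.biUnion (fun p => p.1 ∪ p.2) ∪ T

lemma assemble_hatTheta (G : SimpleGraph V) (S D : Finset V) :
    assemble (hatTheta G S D) (S \ (D ∪ configNbr G (hatTheta G S D))) = S := by
  refine Finset.Subset.antisymm (Finset.union_subset ?_ Finset.sdiff_subset) fun x hx => ?_
  · refine Finset.biUnion_subset.2 fun p hp => Finset.union_subset ?_ ?_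
    · exact (mem_hatTheta.1 hp).1.1.trans Finset.inter_subset_left
    · exact (mem_hatTheta.1 hp).2 ▸ Finset.inter_subset_left
  by_cases hxD : x ∈ D
  · have hxSD : x ∈ (hatTheta G S D).biUnion Prod.fst := by
      rw [biUnion_fst_hatTheta]
      exact Finset.mem_inter.2 ⟨hx, hxD⟩
    obtain ⟨p, hp, hxp⟩ := Finset.mem_biUnion.1 hxSD
    exact Finset.mem_union_left _ (Finset.mem_biUnion.2 ⟨p, hp, Finset.mem_union_left _ hxp⟩)
  by_cases hxN : x ∈ configNbr G (hatTheta G S D)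
  · obtain ⟨p, hp, hxp⟩ := Finset.mem_biUnion.1 hxN
    refine Finset.mem_union_left _ (Finset.mem_biUnion.2 ⟨p, hp, Finset.mem_union_right _ ?_⟩)
    rw [(mem_hatTheta.1 hp).2]
    exact Finset.mem_inter.2 ⟨hx, hxp⟩
  · exact Finset.mem_union_right _ (Finset.mem_sdiff.2 ⟨hx, by simp [hxD, hxN]⟩)

section EdgeCounts

variable {G : SimpleGraph V}

omit [Fintype V] in
lemma eBetween_biUnion {ι : Type*} {s : Finset ι} {f : ι → Finset V}
    (hf : (s : Set ι).PairwiseDisjoint f) (B : Finset V) :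
    eBetween G (s.biUnion f) B = ∑ i ∈ s, eBetween G (f i) B := by
  unfold eBetween
  rw [← Finset.card_biUnion]
  · congr 1
    ext ⟨a, b⟩
    simp only [Finset.mem_filter, Finset.mem_product, Finset.mem_biUnion]
    tauto
  · intro i hi j hj hij
    simp only [Function.onFun, Finset.disjoint_left, Finset.mem_filter, Finset.mem_product]
    exact fun x hx hx' => Finset.disjoint_left.1 (hf hi hj hij) hx.1.1 hx'.1.1

lemma eBetween_inter_nbr {A B : Finset V} (hAB : Disjoint A B) :
    eBetween G A B = eBetween G A (B ∩ nbr G A) := by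
  unfold eBetween
  congr 1
  ext ⟨a, b⟩
  simp only [Finset.mem_filter, Finset.mem_product, Finset.mem_inter, mem_nbr]
  constructor
  · rintro ⟨⟨ha, hb⟩, hab⟩
    exact ⟨⟨ha, hb, Finset.disjoint_right.1 hAB hb, a, ha, hab⟩, hab⟩
  · rintro ⟨⟨ha, hb, -⟩, hab⟩
    exact ⟨⟨ha, hb⟩, hab⟩

lemma inducedEdgeCount_eq_eBetween [DecidableRel G.Adj] {D D' : Finset V} (hd : Disjoint D D')
    (hb : ∀ u v, G.Adj u v → (u ∈ D ∧ v ∈ D') ∨ (u ∈ D' ∧ v ∈ D)) (S : Finset V) :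
    inducedEdgeCount G S = eBetween G (S ∩ D) (S ∩ D') := by
  rw [inducedEdgeCount, eBetween]
  symm
  apply Finset.card_bij (fun e _ => s(e.1, e.2))
  · rintro ⟨a, b⟩ h
    simp only [Finset.mem_filter, Finset.mem_product, Finset.mem_inter] at h
    simp only [Finset.mem_filter, SimpleGraph.mem_edgeFinset, SimpleGraph.mem_edgeSet]
    refine ⟨h.2, fun x hx => ?_⟩
    rcases Sym2.mem_iff.1 hx with rfl | rfl
    exacts [h.1.1.1, h.1.2.1]
  · rintro ⟨a, b⟩ h ⟨a', b'⟩ h' heq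
    simp only [Finset.mem_filter, Finset.mem_product, Finset.mem_inter] at h h'
    rcases Sym2.eq_iff.1 heq with ⟨rfl, rfl⟩ | ⟨rfl, -⟩
    · rfl
    · exact absurd h'.1.2.2 (Finset.disjoint_left.1 hd h.1.1.2)
  · intro e he
    simp only [Finset.mem_filter, SimpleGraph.mem_edgeFinset] at he
    induction e with
    | _ x y =>
      obtain ⟨hxy, hmem⟩ := he
      rw [SimpleGraph.mem_edgeSet] at hxy
      have hx : x ∈ S := hmem x (Sym2.mem_mk_left x y)
      have hy : y ∈ S := hmem y (Sym2.mem_mk_right x y)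
      rcases hb x y hxy with ⟨h1, h2⟩ | ⟨h1, h2⟩
      · exact ⟨(x, y), by simp [hx, hy, h1, h2, hxy]⟩
      · exact ⟨(y, x), by simp [hx, hy, h1, h2, hxy.symm], Sym2.eq_swap⟩

end EdgeCounts

section Bipartite

variable {G : SimpleGraph V} {D D' : Finset V} (hd : Disjoint D D')
  (hb : ∀ u v, G.Adj u v → (u ∈ D ∧ v ∈ D') ∨ (u ∈ D' ∧ v ∈ D))
  {Θ : Finset (Finset V × Finset V)} {T : Finset V}

include hd hb

lemma nbr_subset_of_subset {A : Finset V} (hA : A ⊆ D) : nbr G A ⊆ D' := by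
  intro v hv
  obtain ⟨-, a, ha, hav⟩ := mem_nbr.1 hv
  exact (hb a v hav).elim And.right fun h => absurd (hA ha) (Finset.disjoint_right.1 hd h.1)

variable (hΘ : IsConfig G D Θ)
include hΘ

lemma IsConfig.snd_subset {p : Finset V × Finset V} (hp : p ∈ Θ) : p.2 ⊆ D' :=
  (hΘ.1 p hp).2.2.2.trans (nbr_subset_of_subset hd hb (hΘ.1 p hp).1)

lemma IsConfig.configNbr_subset : configNbr G Θ ⊆ D' :=
  Finset.biUnion_subset.2 fun p hp => nbr_subset_of_subset hd hb (hΘ.1 p hp).1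

variable (hT : T ⊆ D' \ configNbr G Θ)
include hT

lemma assemble_inter_left : assemble Θ T ∩ D = Θ.biUnion Prod.fst := by
  ext x
  simp only [assemble, Finset.mem_inter, Finset.mem_union, Finset.mem_biUnion]
  constructor
  · rintro ⟨⟨p, hp, h | h⟩ | hxT, hxD⟩
    · exact ⟨p, hp, h⟩
    · exact absurd hxD (Finset.disjoint_right.1 hd (hΘ.snd_subset hd hb hp h))
    · exact absurd hxD (Finset.disjoint_right.1 hd (Finset.mem_sdiff.1 (hT hxT)).1)
  · rintro ⟨p, hp, hx⟩
    exact ⟨Or.inl ⟨p, hp, Or.inl hx⟩, (hΘ.1 p hp).1 hx⟩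

lemma assemble_inter_nbr {p : Finset V × Finset V} (hp : p ∈ Θ) :
    assemble Θ T ∩ nbr G p.1 = p.2 := by
  refine Finset.Subset.antisymm (fun v hv => ?_) fun v hv =>
    Finset.mem_inter.2 ⟨Finset.mem_union_left _ (Finset.mem_biUnion.2
      ⟨p, hp, Finset.mem_union_right _ hv⟩), (hΘ.1 p hp).2.2.2 hv⟩
  obtain ⟨hvS, hvN⟩ := Finset.mem_inter.1 hv
  rcases Finset.mem_union.1 hvS with h | h
  · obtain ⟨q, hq, hvq⟩ := Finset.mem_biUnion.1 h
    rcases Finset.mem_union.1 hvq with h' | h'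
    · exact absurd ((hΘ.1 q hq).1 h')
        (Finset.disjoint_right.1 hd (nbr_subset_of_subset hd hb (hΘ.1 p hp).1 hvN))
    · by_cases hpq : p = q
      · exact hpq ▸ h'
      · exact absurd hvN
          (Finset.disjoint_right.1 (hΘ.disjoint_nbr hp hq hpq) ((hΘ.1 q hq).2.2.2 h'))
  · exact absurd (Finset.mem_biUnion.2 ⟨p, hp, hvN⟩) (Finset.mem_sdiff.1 (hT h)).2

lemma hatTheta_assemble : hatTheta G (assemble Θ T) D = Θ := by
  ext q
  rw [mem_hatTheta, assemble_inter_left hd hb hΘ hT]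
  constructor
  · rintro ⟨hq, hq₂⟩
    obtain ⟨p, hp, hpq⟩ := hΘ.exists_fst_eq hq
    have : q = p := Prod.ext hpq.symm (by rw [hq₂, ← hpq, assemble_inter_nbr hd hb hΘ hT hp])
    exact this ▸ hp
  · intro hq
    exact ⟨hΘ.maxComp hq, (assemble_inter_nbr hd hb hΘ hT hq).symm⟩

omit hb in
lemma assemble_sdiff : assemble Θ T \ (D ∪ configNbr G Θ) = T := by
  ext x
  simp only [assemble, Finset.mem_sdiff, Finset.mem_union, not_or]
  constructor
  · rintro ⟨(h | h), hxD, hxN⟩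
    · obtain ⟨p, hp, hxp⟩ := Finset.mem_biUnion.1 h
      rcases Finset.mem_union.1 hxp with h' | h'
      · exact absurd ((hΘ.1 p hp).1 h') hxD
      · exact absurd (Finset.mem_biUnion.2 ⟨p, hp, (hΘ.1 p hp).2.2.2 h'⟩) hxN
    · exact h
  · intro hx
    obtain ⟨hxD', hxN⟩ := Finset.mem_sdiff.1 (hT hx)
    exact ⟨Or.inr hx, Finset.disjoint_right.1 hd hxD', hxN⟩

lemma card_assemble : #(assemble Θ T) = ∑ p ∈ Θ, (#p.1 + #p.2) + #T := by
  have hpolymers : (Θ : Set (Finset V × Finset V)).PairwiseDisjoint fun p => p.1 ∪ p.2 := by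
    intro p hp q hq hpq
    rw [Function.onFun, Finset.disjoint_union_left, Finset.disjoint_union_right,
      Finset.disjoint_union_right]
    exact ⟨⟨hΘ.disjoint_fst hp hq hpq,
        hd.mono (hΘ.1 p hp).1 (hΘ.snd_subset hd hb hq)⟩,
      hd.symm.mono (hΘ.snd_subset hd hb hp) (hΘ.1 q hq).1,
      (hΘ.disjoint_nbr hp hq hpq).mono (hΘ.1 p hp).2.2.2 (hΘ.1 q hq).2.2.2⟩
  have hfree : Disjoint (Θ.biUnion fun p => p.1 ∪ p.2) T := by
    refine Finset.disjoint_left.2 fun x hx hxT => ?_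
    obtain ⟨p, hp, hxp⟩ := Finset.mem_biUnion.1 hx
    obtain ⟨hxD', hxN⟩ := Finset.mem_sdiff.1 (hT hxT)
    rcases Finset.mem_union.1 hxp with h | h
    · exact Finset.disjoint_left.1 hd ((hΘ.1 p hp).1 h) hxD'
    · exact hxN (Finset.mem_biUnion.2 ⟨p, hp, (hΘ.1 p hp).2.2.2 h⟩)
  rw [assemble, Finset.card_union_of_disjoint hfree, Finset.card_biUnion hpolymers]
  congr 1
  exact Finset.sum_congr rfl fun p hp => Finset.card_union_of_disjoint
    (hd.mono (hΘ.1 p hp).1 (hΘ.snd_subset hd hb hp))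

variable [DecidableRel G.Adj]

lemma inducedEdgeCount_assemble :
    inducedEdgeCount G (assemble Θ T) = ∑ p ∈ Θ, eBetween G p.1 p.2 := by
  have hfst : (Θ : Set (Finset V × Finset V)).PairwiseDisjoint Prod.fst :=
    fun p hp q hq hpq => hΘ.disjoint_fst hp hq hpq
  rw [inducedEdgeCount_eq_eBetween hd hb, assemble_inter_left hd hb hΘ hT,
    eBetween_biUnion hfst]
  refine Finset.sum_congr rfl fun p hp => ?_
  have hnbr : nbr G p.1 ⊆ D' := nbr_subset_of_subset hd hb (hΘ.1 p hp).1
  rw [eBetween_inter_nbr (hd.mono (hΘ.1 p hp).1 Finset.inter_subset_right), Finset.inter_assoc,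
    Finset.inter_eq_right.2 hnbr, assemble_inter_nbr hd hb hΘ hT hp]

end Bipartite

def polyWeightNum (G : SimpleGraph V) (lam beta : ℝ) (p : Finset V × Finset V) : ℝ :=
  lam ^ (#p.1 + #p.2) * Real.exp (-beta * (eBetween G p.1 p.2 : ℝ))

def spinWeight (G : SimpleGraph V) [DecidableRel G.Adj] (lam beta : ℝ) (S : Finset V) : ℝ :=
  lam ^ #S * Real.exp (-beta * (inducedEdgeCount G S : ℝ))

section Weights

variable {G : SimpleGraph V} (lam beta : ℝ) {D D' : Finset V} {Θ : Finset (Finset V × Finset V)}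

lemma IsConfig.prod_polyWeight (hΘ : IsConfig G D Θ) :
    ∏ p ∈ Θ, polyWeight G lam beta p =
      (∏ p ∈ Θ, polyWeightNum G lam beta p) / (1 + lam) ^ #(configNbr G Θ) := by
  rw [configNbr, Finset.card_biUnion fun p hp q hq hpq => hΘ.disjoint_nbr hp hq hpq,
    ← Finset.prod_pow_eq_pow_sum, ← Finset.prod_div_distrib]
  rfl

variable [DecidableRel G.Adj] (hd : Disjoint D D')
  (hb : ∀ u v, G.Adj u v → (u ∈ D ∧ v ∈ D') ∨ (u ∈ D' ∧ v ∈ D)) (hΘ : IsConfig G D Θ)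
include hd hb hΘ

lemma spinWeight_assemble {T : Finset V} (hT : T ⊆ D' \ configNbr G Θ) :
    spinWeight G lam beta (assemble Θ T) = (∏ p ∈ Θ, polyWeightNum G lam beta p) * lam ^ #T := by
  rw [spinWeight, card_assemble hd hb hΘ hT, inducedEdgeCount_assemble hd hb hΘ hT, pow_add,
    ← Finset.prod_pow_eq_pow_sum, Nat.cast_sum, Finset.mul_sum, Real.exp_sum]
  simp only [polyWeightNum, Finset.prod_mul_distrib]
  ring

/-- The free vertices contribute `(1 + λ)^{|D' \ N(Θ)|}`; the missing `(1 + λ)^{|N(Θ)|}` is made up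
by the denominators of the polymer weights. -/
lemma sum_spinWeight_assemble (hlam : 1 + lam ≠ 0) :
    ∑ T ∈ (D' \ configNbr G Θ).powerset, spinWeight G lam beta (assemble Θ T) =
      (1 + lam) ^ #D' * ∏ p ∈ Θ, polyWeight G lam beta p := by
  have hN : configNbr G Θ ⊆ D' := hΘ.configNbr_subset hd hb
  have hfree : ∑ T ∈ (D' \ configNbr G Θ).powerset, lam ^ #T =
      (1 + lam) ^ #(D' \ configNbr G Θ) := by
    simpa [add_comm] using Finset.sum_pow_mul_eq_add_pow lam 1 (D' \ configNbr G Θ)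
  rw [Finset.sum_congr rfl fun T hT => spinWeight_assemble lam beta hd hb hΘ
      (Finset.mem_powerset.1 hT), ← Finset.mul_sum, hfree, hΘ.prod_polyWeight,
    Finset.card_sdiff_of_subset hN, pow_sub₀ _ hlam (Finset.card_le_card hN)]
  field_simp

end Weights

section PartitionFunction

variable {G : SimpleGraph V} [DecidableRel G.Adj] (lam beta : ℝ) {D D' : Finset V}
  (hd : Disjoint D D') (hu : D ∪ D' = Finset.univ)
  (hb : ∀ u v, G.Adj u v → (u ∈ D ∧ v ∈ D') ∨ (u ∈ D' ∧ v ∈ D))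
include hd hu hb

/-- `S ↦ (Θ̂(S), S \ (D ∪ N(Θ̂(S))))` is a bijection onto the pairs of a configuration `Θ` and a
set of free vertices `T ⊆ D' \ N(Θ)`, with inverse `assemble`. -/
lemma sum_hatWstar_eq_sum_configs :
    ∑ S, hatWstar G lam beta S D = ∑ Θ ∈ Finset.univ.filter (IsConfig G D),
      ∑ T ∈ (D' \ configNbr G Θ).powerset, spinWeight G lam beta (assemble Θ T) := by
  let pieces : Finset V → Finset (Finset V × Finset V) × Finset V :=
    fun S => (hatTheta G S D, S \ (D ∪ configNbr G (hatTheta G S D)))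
  have hfree (S : Finset V) : (pieces S).2 ⊆ D' \ configNbr G (pieces S).1 := by
    intro x hx
    simp only [pieces, Finset.mem_sdiff, Finset.mem_union, not_or] at hx ⊢
    exact ⟨(Finset.mem_union.1 (hu ▸ Finset.mem_univ x)).resolve_left hx.2.1, hx.2.2⟩
  calc ∑ S, hatWstar G lam beta S D
      = ∑ S ∈ Finset.univ.filter (fun S => IsConfig G D (hatTheta G S D)),
          spinWeight G lam beta S := (Finset.sum_filter _ _).symm
    _ = ∑ b ∈ Finset.univ.filter (fun b : Finset (Finset V × Finset V) × Finset V =>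
          IsConfig G D b.1 ∧ b.2 ⊆ D' \ configNbr G b.1),
          spinWeight G lam beta (assemble b.1 b.2) := by
      refine Finset.sum_nbij' pieces (fun b => assemble b.1 b.2) ?_ ?_ ?_ ?_ ?_
      · intro S hS
        simp only [Finset.mem_filter, Finset.mem_univ, true_and] at hS ⊢
        exact ⟨hS, hfree S⟩
      · rintro ⟨Θ, T⟩ h
        simp only [Finset.mem_filter, Finset.mem_univ, true_and] at h ⊢
        rw [hatTheta_assemble hd hb h.1 h.2]
        exact h.1
      · intro S _
        exact assemble_hatTheta G S D
      · rintro ⟨Θ, T⟩ h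
        simp only [Finset.mem_filter, Finset.mem_univ, true_and] at h
        simp only [pieces, hatTheta_assemble hd hb h.1 h.2, assemble_sdiff hd h.1 h.2]
      · intro S _
        simp only [pieces, assemble_hatTheta]
    _ = _ := Finset.sum_finset_product _ _ _ (by simp)

lemma sum_hatWstar (hlam : 1 + lam ≠ 0) :
    ∑ S, hatWstar G lam beta S D = (1 + lam) ^ #D' * Xi G lam beta D := by
  rw [sum_hatWstar_eq_sum_configs lam beta hd hu hb, Xi, Finset.mul_sum]
  refine Finset.sum_congr rfl fun Θ hΘ => ?_
  exact sum_spinWeight_assemble lam beta hd hb (Finset.mem_filter.1 hΘ).2 hlam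

end PartitionFunction

theorem stmt10_general (G : SimpleGraph V) [DecidableRel G.Adj]
    (O E : Finset V) (hdisj : Disjoint O E) (hunion : O ∪ E = Finset.univ)
    (hbip : ∀ u v, G.Adj u v → (u ∈ O ∧ v ∈ E) ∨ (u ∈ E ∧ v ∈ O))
    (hcard : O.card = E.card)
    (lam beta : ℝ) (hlam : 0 < lam) :
    ∑ S : Finset V, (hatWstar G lam beta S O + hatWstar G lam beta S E) =
      (1 + lam) ^ ((Fintype.card V : ℝ) / 2) *
        (Xi G lam beta O + Xi G lam beta E) := by
  have hlam' : 1 + lam ≠ 0 := by positivity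
  have hhalf : (Fintype.card V : ℝ) / 2 = #E := by
    rw [← Finset.card_univ, ← hunion, Finset.card_union_of_disjoint hdisj, hcard]
    push_cast
    ring
  rw [Finset.sum_add_distrib, sum_hatWstar lam beta hdisj hunion hbip hlam',
    sum_hatWstar lam beta hdisj.symm (Finset.union_comm O E ▸ hunion)
      (fun u v h => (hbip u v h).symm) hlam', hhalf, Real.rpow_natCast, hcard]
  ring

/-- For the antiferromagnetic Ising model on a `d`-regular bipartite graph `G` with
bipartition `(O, E)`, the partition function of the polymer-model approximation,
`Ẑ = ∑_S (ω̂*(S,O) + ω̂*(S,E))`, satisfies `Ẑ = (1+λ)^{n/2}·(Ξ_O + Ξ_E)`. -/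
theorem stmt10 (G : SimpleGraph V) [DecidableRel G.Adj] (d : ℕ)
    (hreg : G.IsRegularOfDegree d)
    (O E : Finset V) (hdisj : Disjoint O E) (hunion : O ∪ E = Finset.univ)
    (hbip : ∀ u v, G.Adj u v → (u ∈ O ∧ v ∈ E) ∨ (u ∈ E ∧ v ∈ O))
    (hcard : O.card = E.card)
    (lam beta : ℝ) (hlam : 0 < lam) (hbeta : 0 < beta) :
    ∑ S : Finset V, (hatWstar G lam beta S O + hatWstar G lam beta S E) =
      (1 + lam) ^ ((Fintype.card V : ℝ) / 2) *
        (Xi G lam beta O + Xi G lam beta E) :=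
  stmt10_general G O E hdisj hunion hbip hcard lam beta hlam

end
end
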